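/- arXiv:1901.07643 — 7 statements merged into one kernel-verified Lean document; each statement's English description precedes it below -/
import Mathlib

section
/- Let m ≥ 2 and let π_0, π_1, …, π_T be a sequence of permutations of {1, …, m} in which each π_{t+1} is obtained from π_t by an adjacent transposition at some position. If every subset S ⊆ {1, …, m} with 1 ≤ |S| ≤ m−1 occurs as the prefix set of size |S| of some π_t, then T ≥ 2^m − m − 1. -/
/-- The prefix set of size `k` of a permutation `σ` of `{1, …, m}` (represented
0-indexed as `Equiv.Perm (Fin m)`): the set `{σ(1), …, σ(k)}`. -/
def prefixSet {m : ℕ} (σ : Equiv.Perm (Fin m)) (k : ℕ) : Finset (Fin m) :=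
  (Finset.univ.filter fun i : Fin m => (i : ℕ) < k).image σ

/-- The adjacent transposition at (1-indexed) position `j` of an ordering of
`m` variables: it swaps positions `j` and `j+1` (0-indexed `j−1` and `j`). -/
def adjSwap (m j : ℕ) : Equiv.Perm (Fin m) :=
  if h : 1 ≤ j ∧ j + 1 ≤ m then Equiv.swap ⟨j - 1, by omega⟩ ⟨j, by omega⟩ else 1

/-- `σ'` is obtained from `σ` by an adjacent transposition at some position. -/
def IsAdjSwapStep {m : ℕ} (σ σ' : Equiv.Perm (Fin m)) : Prop :=
  ∃ j : ℕ, 1 ≤ j ∧ j + 1 ≤ m ∧ σ' = σ * adjSwap m j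

lemma adjSwap_lt_iff {m j k : ℕ} (h1 : 1 ≤ j) (h2 : j + 1 ≤ m) (hk : k ≠ j)
    (x : Fin m) : ((adjSwap m j x : Fin m) : ℕ) < k ↔ (x : ℕ) < k := by
  have hab : adjSwap m j = Equiv.swap (⟨j - 1, by omega⟩ : Fin m) ⟨j, by omega⟩ := by
    simp [adjSwap, h1, h2]
  rw [hab, Equiv.swap_apply_def]
  split_ifs with hxa hxb
  · have : (x : ℕ) = j - 1 := congrArg Fin.val hxa
    simp only [Fin.val_mk]; omega
  · have : (x : ℕ) = j := congrArg Fin.val hxb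
    simp only [Fin.val_mk]; omega
  · rfl

lemma adjSwap_image_filter {m j k : ℕ} (h1 : 1 ≤ j) (h2 : j + 1 ≤ m) (hk : k ≠ j) :
    Finset.image (adjSwap m j) (Finset.univ.filter fun i : Fin m => (i : ℕ) < k)
      = Finset.univ.filter fun i : Fin m => (i : ℕ) < k := by
  ext y
  simp only [Finset.mem_image, Finset.mem_filter, Finset.mem_univ, true_and]
  constructor
  · rintro ⟨x, hx, rfl⟩
    exact (adjSwap_lt_iff h1 h2 hk x).2 hx
  · intro hy
    refine ⟨adjSwap m j y, (adjSwap_lt_iff h1 h2 hk y).2 hy, ?_⟩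
    have hab : adjSwap m j = Equiv.swap (⟨j - 1, by omega⟩ : Fin m) ⟨j, by omega⟩ := by
      simp [adjSwap, h1, h2]
    rw [hab, Equiv.swap_apply_self]

lemma prefixSet_mul_adjSwap {m : ℕ} (σ : Equiv.Perm (Fin m)) {j : ℕ} (k : ℕ)
    (h1 : 1 ≤ j) (h2 : j + 1 ≤ m) (hk : k ≠ j) :
    prefixSet (σ * adjSwap m j) k = prefixSet σ k := by
  unfold prefixSet
  rw [show ⇑(σ * adjSwap m j) = ⇑σ ∘ ⇑(adjSwap m j) from rfl,
    ← Finset.image_image, adjSwap_image_filter h1 h2 hk]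

/-- Let m ≥ 2 and let π_0, …, π_T be a sequence of permutations of
{1, …, m} in which each π_{t+1} is obtained from π_t by an adjacent transposition.
If every subset S with 1 ≤ |S| ≤ m−1 occurs as the prefix set of size |S| of some
π_t, then T ≥ 2^m − m − 1. -/
theorem transpositions_lower_bound (m T : ℕ) (hm : 2 ≤ m)
    (π : ℕ → Equiv.Perm (Fin m))
    (hstep : ∀ t, t < T → IsAdjSwapStep (π t) (π (t + 1)))
    (hcover : ∀ S : Finset (Fin m), 1 ≤ S.card → S.card ≤ m - 1 →
      ∃ t ≤ T, prefixSet (π t) S.card = S) :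
    2 ^ m - m - 1 ≤ T := by
  set C : ℕ → Finset (Finset (Fin m)) := fun t =>
    (Finset.range (t + 1)).biUnion fun s =>
      (Finset.Icc 1 (m - 1)).image fun k => prefixSet (π s) k with hC
  have hcard : ∀ t, t ≤ T → (C t).card ≤ (m - 1) + t := by
    intro t
    induction t with
    | zero =>
      intro _
      have h0 : C 0 = (Finset.Icc 1 (m - 1)).image fun k => prefixSet (π 0) k := by
        simp [hC]
      rw [h0]
      calc ((Finset.Icc 1 (m - 1)).image fun k => prefixSet (π 0) k).card
          ≤ (Finset.Icc 1 (m - 1)).card := Finset.card_image_le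
        _ = m - 1 := by rw [Nat.card_Icc]; omega
        _ ≤ (m - 1) + 0 := by omega
    | succ t ih =>
      intro ht
      obtain ⟨j, hj1, hj2, hj3⟩ := hstep t (by omega)
      have hsub : C (t + 1) ⊆ insert (prefixSet (π (t + 1)) j) (C t) := by
        intro S hS
        simp only [hC, Finset.mem_biUnion, Finset.mem_range, Finset.mem_image] at hS
        obtain ⟨s, hs, k, hk, rfl⟩ := hS
        rw [Finset.mem_insert]
        by_cases hst : s = t + 1
        · subst hst
          by_cases hkj : k = j
          · subst hkj; left; rfl
          · right
            rw [hj3, prefixSet_mul_adjSwap _ k hj1 hj2 hkj]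
            simp only [hC, Finset.mem_biUnion, Finset.mem_range, Finset.mem_image]
            exact ⟨t, by omega, k, hk, rfl⟩
        · right
          simp only [hC, Finset.mem_biUnion, Finset.mem_range, Finset.mem_image]
          exact ⟨s, by omega, k, hk, rfl⟩
      calc (C (t + 1)).card ≤ (insert (prefixSet (π (t + 1)) j) (C t)).card :=
            Finset.card_le_card hsub
        _ ≤ (C t).card + 1 := Finset.card_insert_le _ _
        _ ≤ (m - 1) + t + 1 := by have := ih (by omega); omega
  -- lower bound on (C T).card
  set A : Finset (Finset (Fin m)) :=
    Finset.univ.powerset.filter fun S : Finset (Fin m) => 1 ≤ S.card ∧ S.card ≤ m - 1 with hA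
  have hsubA : A ⊆ C T := by
    intro S hS
    rw [hA, Finset.mem_filter] at hS
    obtain ⟨t, htT, hpre⟩ := hcover S hS.2.1 hS.2.2
    simp only [hC, Finset.mem_biUnion, Finset.mem_range, Finset.mem_image]
    exact ⟨t, by omega, S.card, Finset.mem_Icc.2 ⟨hS.2.1, hS.2.2⟩, hpre⟩
  have hAcard : 2 ^ m ≤ A.card + 2 := by
    have hpart := Finset.card_filter_add_card_filter_not
      (s := (Finset.univ : Finset (Fin m)).powerset)
      (p := fun S : Finset (Fin m) => 1 ≤ S.card ∧ S.card ≤ m - 1)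
    have hneg : ((Finset.univ : Finset (Fin m)).powerset.filter
        fun S : Finset (Fin m) => ¬(1 ≤ S.card ∧ S.card ≤ m - 1))
          ⊆ {∅, Finset.univ} := by
      intro S hS
      rw [Finset.mem_filter] at hS
      have hle : S.card ≤ m := by
        have := Finset.card_le_card (Finset.mem_powerset.1 hS.1)
        simpa using this
      rcases hS.2 with h
      have : S.card = 0 ∨ S.card = m := by omega
      rcases this with h0 | hmcard
      · exact Finset.mem_insert.2 (Or.inl (Finset.card_eq_zero.1 h0))
      · refine Finset.mem_insert.2 (Or.inr ?_)
        rw [Finset.mem_singleton]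
        apply Finset.eq_univ_of_card
        simpa using hmcard
    have hneg2 : ((Finset.univ : Finset (Fin m)).powerset.filter
        fun S : Finset (Fin m) => ¬(1 ≤ S.card ∧ S.card ≤ m - 1)).card ≤ 2 := by
      calc _ ≤ ({∅, Finset.univ} : Finset (Finset (Fin m))).card :=
            Finset.card_le_card hneg
        _ ≤ 2 := Finset.card_insert_le _ _ |>.trans (by simp)
    have hpow : (Finset.univ : Finset (Fin m)).powerset.card = 2 ^ m := by
      simp [Finset.card_powerset]
    rw [hA]
    omega
  have h1 := Finset.card_le_card hsubA
  have h2 := hcard T le_rfl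
  have h4 : 4 ≤ 2 ^ m := by
    calc (4 : ℕ) = 2 ^ 2 := rfl
      _ ≤ 2 ^ m := Nat.pow_le_pow_right (by norm_num) hm
  omega
end

section
/- Let m ≥ 2, let Υ(m) be defined recursively by Υ(2) = [1] and Υ(m) = Υ(m−1) ++ [m−1, m−2, …, 1] ++ [i+1 : i ∈ Υ(m−1)], and define permutations π_0, π_1, …, π_{|Υ(m)|} of {1, …, m} by π_0 = identity and π_{t+1} obtained from π_t by the adjacent transposition at position Υ(m)[t+1] (the (t+1)-st entry of the list). Then every subset S ⊆ {1, …, m} with 1 ≤ |S| ≤ m−1 occurs as the prefix set of size |S| of some π_t. -/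
open Equiv Finset Pointwise

def countdown (n : ℕ) : List ℕ := (List.range n).map (fun j => n - j)

lemma countdown_succ (n : ℕ) : countdown (n + 1) = (n + 1) :: countdown n := by
  simp [countdown, List.range_succ_eq_map]

/-- Indexed so that `greedySwaps 1 = []`: then `greedySwaps 2 = [1]` is an instance of the
recursion, and the induction below needs no base case. -/
def greedySwaps : ℕ → List ℕ
  | 0 => []
  | n + 1 => greedySwaps n ++ countdown n ++ (greedySwaps n).map (· + 1)

lemma length_greedySwaps_succ (n : ℕ) :
    (greedySwaps (n + 1)).length = (greedySwaps n).length + n + (greedySwaps n).length := by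
  simp [greedySwaps, countdown]
  omega

lemma mem_countdown {n j : ℕ} (h : j ∈ countdown n) : 1 ≤ j ∧ j ≤ n := by
  simp only [countdown, List.mem_map, List.mem_range] at h
  omega

lemma mem_greedySwaps {n j : ℕ} (h : j ∈ greedySwaps n) : 1 ≤ j ∧ j < n := by
  induction n generalizing j with
  | zero => simp [greedySwaps] at h
  | succ n ih =>
    simp only [greedySwaps, List.mem_append, List.mem_map] at h
    rcases h with (h | h) | ⟨i, hi, rfl⟩
    · have := ih h; omega
    · have := mem_countdown h; omega
    · have := ih hi; omega

lemma eq_greedySwaps_of_rec (Υ : ℕ → List ℕ) (hbase : Υ 2 = [1])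
    (hrec : ∀ k, 3 ≤ k →
      Υ k = Υ (k - 1) ++ (List.range (k - 1)).map (fun j => k - 1 - j)
              ++ (Υ (k - 1)).map (· + 1))
    {n : ℕ} (hn : 2 ≤ n) : Υ n = greedySwaps n := by
  induction n, hn using Nat.le_induction with
  | base => rw [hbase]; rfl
  | succ n _ ih => rw [hrec (n + 1) (by omega), Nat.add_sub_cancel, ih]; rfl

section Windows

variable {m : ℕ}

def posWindow (m a k : ℕ) : Finset (Fin m) :=
  univ.filter fun i : Fin m => a ≤ (i : ℕ) ∧ (i : ℕ) < a + k

lemma prefixSet_eq_smul_posWindow (σ : Perm (Fin m)) (k : ℕ) :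
    prefixSet σ k = σ • posWindow m 0 k := by
  simp [prefixSet, posWindow, smul_finset_def, Perm.smul_def]

lemma posWindow_zero_self : posWindow m 0 m = univ := by
  ext i; simp [posWindow]

lemma posWindow_succ_left {a : ℕ} (k : ℕ) (h : a < m) :
    posWindow m a (k + 1) = insert ⟨a, h⟩ (posWindow m (a + 1) k) := by
  ext i; simp only [posWindow, mem_filter, mem_univ, true_and, mem_insert, Fin.ext_iff]; omega

lemma posWindow_succ_right {a k : ℕ} (h : a + k < m) :
    posWindow m a (k + 1) = insert ⟨a + k, h⟩ (posWindow m a k) := by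
  ext i; simp only [posWindow, mem_filter, mem_univ, true_and, mem_insert, Fin.ext_iff]; omega

lemma card_posWindow {a k : ℕ} (h : a + k ≤ m) : #(posWindow m a k) = k := by
  have : (posWindow m a k).map Fin.valEmbedding = Ico a (a + k) := by
    ext i
    simp only [posWindow, mem_map, mem_filter, mem_univ, true_and, Fin.valEmbedding_apply, mem_Ico]
    exact ⟨fun ⟨j, hj, hji⟩ => hji ▸ hj, fun hi => ⟨⟨i, by omega⟩, hi, rfl⟩⟩
  rw [← card_map, this, Nat.card_Ico, Nat.add_sub_cancel_left]

lemma adjSwap_apply_of_ne {j : ℕ} {i : Fin m} (h₁ : j ≠ i) (h₂ : j ≠ i + 1) :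
    adjSwap m j i = i := by
  unfold adjSwap
  split_ifs
  · exact swap_apply_of_ne_of_ne (by simp [Fin.ext_iff]; omega) (by simp [Fin.ext_iff]; omega)
  · rfl

lemma adjSwap_succ_apply (i : Fin m) (h : i + 1 < m) : adjSwap m (i + 1) i = ⟨i + 1, h⟩ := by
  rw [adjSwap, dif_pos (by omega)]
  exact swap_apply_left _ _

lemma adjSwap_smul_posWindow {a k j : ℕ} (h₁ : a < j) (h₂ : j < a + k) :
    adjSwap m j • posWindow m a k = posWindow m a k := by
  unfold adjSwap
  split_ifs
  · ext i
    rw [← swap_inv, mem_inv_smul_finset_iff, Perm.smul_def, swap_apply_def]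
    split_ifs <;> simp_all [posWindow, Fin.ext_iff] <;> omega
  · exact one_smul _ _

def swapProd (m : ℕ) (l : List ℕ) : Perm (Fin m) := (l.map (adjSwap m)).prod

lemma swapProd_append (l₁ l₂ : List ℕ) :
    swapProd m (l₁ ++ l₂) = swapProd m l₁ * swapProd m l₂ := by
  simp [swapProd]

lemma swapProd_mem {H : Subgroup (Perm (Fin m))} {l : List ℕ}
    (h : ∀ j ∈ l, adjSwap m j ∈ H) :
    swapProd m l ∈ H :=
  H.list_prod_mem (by simpa using h)

lemma swapProd_apply_of_forall_ne {l : List ℕ} {i : Fin m}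
    (h : ∀ j ∈ l, j ≠ i ∧ j ≠ i + 1) :
    swapProd m l i = i :=
  (swapProd_mem (H := MulAction.stabilizer _ i) fun j hj =>
    adjSwap_apply_of_ne (h j hj).1 (h j hj).2 : swapProd m l • i = i)

lemma swapProd_smul_posWindow {l : List ℕ} {a k : ℕ} (h : ∀ j ∈ l, a < j ∧ j < a + k) :
    swapProd m l • posWindow m a k = posWindow m a k :=
  MulAction.mem_stabilizer_iff.mp <| swapProd_mem fun j hj =>
    MulAction.mem_stabilizer_iff.mpr <| adjSwap_smul_posWindow (h j hj).1 (h j hj).2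

lemma swapProd_countdown_apply {a n : ℕ} (h : a + n < m) :
    swapProd m ((countdown n).map (· + a)) ⟨a, by omega⟩ = ⟨a + n, h⟩ := by
  induction n with
  | zero => rfl
  | succ n ih =>
    rw [countdown_succ, List.map_cons, swapProd, List.map_cons, List.prod_cons, Perm.mul_apply]
    rw [← swapProd, ih (by omega), show n + 1 + a = a + n + 1 by omega]
    exact adjSwap_succ_apply ⟨a + n, by omega⟩ h

lemma map_greedySwaps_succ (a n : ℕ) :
    (greedySwaps (n + 1)).map (· + a) =
      (greedySwaps n).map (· + a) ++ (countdown n).map (· + a) ++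
        (greedySwaps n).map (· + (a + 1)) := by
  simp only [greedySwaps, List.map_append, List.map_map]
  congr 2 with j
  simp only [Function.comp_apply]
  omega

lemma swapProd_greedySwaps_countdown_apply {a n : ℕ} (h : a + n < m) :
    swapProd m ((greedySwaps n).map (· + a) ++ (countdown n).map (· + a)) ⟨a, by omega⟩ =
      ⟨a + n, h⟩ := by
  rw [swapProd_append, Perm.mul_apply, swapProd_countdown_apply h]
  refine swapProd_apply_of_forall_ne fun j hj => ?_
  obtain ⟨i, hi, rfl⟩ := List.mem_map.mp hj
  have := mem_greedySwaps hi
  dsimp only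
  omega

lemma swapProd_greedySwaps_countdown_smul_posWindow (a n : ℕ) :
    swapProd m ((greedySwaps n).map (· + a) ++ (countdown n).map (· + a)) •
      posWindow m a (n + 1) = posWindow m a (n + 1) := by
  refine swapProd_smul_posWindow fun j hj => ?_
  simp only [List.mem_append, List.mem_map] at hj
  rcases hj with ⟨i, hi, rfl⟩ | ⟨i, hi, rfl⟩
  · have := mem_greedySwaps hi; omega
  · have := mem_countdown hi; omega

lemma swapProd_take_greedySwaps_apply {a n : ℕ} (h : a < m) (t : ℕ) :
    swapProd m (((greedySwaps n).map (· + (a + 1))).take t) ⟨a, h⟩ = ⟨a, h⟩ := by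
  refine swapProd_apply_of_forall_ne fun j hj => ?_
  obtain ⟨i, hi, rfl⟩ := List.mem_map.mp (List.mem_of_mem_take hj)
  have := mem_greedySwaps hi
  dsimp only
  omega

theorem exists_swapProd_take_greedySwaps_smul_posWindow (n : ℕ) {a : ℕ} (h : a + n ≤ m)
    (σ : Perm (Fin m)) {S : Finset (Fin m)} (hS : S ⊆ σ • posWindow m a n) (hlt : #S < n) :
    ∃ t ≤ (greedySwaps n).length,
      (σ * swapProd m (((greedySwaps n).map (· + a)).take t)) • posWindow m a #S = S := by
  induction n generalizing a σ S with
  | zero => omega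
  | succ n ih =>
    rw [length_greedySwaps_succ, map_greedySwaps_succ]
    rw [posWindow_succ_right (by omega), smul_finset_insert] at hS
    set x := σ • (⟨a + n, by omega⟩ : Fin m)
    by_cases hx : x ∈ S
    · -- `τ` is the arrangement after phases 1 and 2: `x` at the front, the same window contents.
      set τ := σ * swapProd m ((greedySwaps n).map (· + a) ++ (countdown n).map (· + a))
      have hτa : τ • (⟨a, by omega⟩ : Fin m) = x := by
        simp only [τ, x, mul_smul, Perm.smul_def,
          swapProd_greedySwaps_countdown_apply (by omega : a + n < m)]
      have hτS : S.erase x ⊆ τ • posWindow m (a + 1) n := by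
        rwa [← subset_insert_iff, ← hτa, ← smul_finset_insert,
          ← posWindow_succ_left _ (by omega), mul_smul,
          swapProd_greedySwaps_countdown_smul_posWindow, posWindow_succ_right (by omega),
          smul_finset_insert]
      have hcard : #(S.erase x) + 1 = #S := card_erase_add_one hx
      obtain ⟨t, ht, hSt⟩ := ih (by omega) τ hτS (by omega)
      refine ⟨(greedySwaps n).length + n + t, by omega, ?_⟩
      rw [show (greedySwaps n).length + n + t =
          ((greedySwaps n).map (· + a) ++ (countdown n).map (· + a)).length + t by
            simp [countdown],
        List.take_length_add_append, swapProd_append, ← mul_assoc, ← hcard,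
        posWindow_succ_left _ (by omega), smul_finset_insert, hSt, mul_smul,
        Perm.smul_def _ (⟨a, _⟩ : Fin m), swapProd_take_greedySwaps_apply, hτa,
        insert_erase hx]
    · have hS' : S ⊆ σ • posWindow m a n := (subset_insert_iff_of_notMem hx).mp hS
      rcases Nat.lt_or_eq_of_le (Nat.lt_succ_iff.mp hlt) with hlt' | heq
      · obtain ⟨t, ht, hSt⟩ := ih (by omega) σ hS' hlt'
        refine ⟨t, by omega, ?_⟩
        rwa [List.append_assoc, List.take_append_of_le_length (by simpa using ht)]
      · refine ⟨0, by omega, ?_⟩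
        rw [List.take_zero, swapProd, List.map_nil, List.prod_nil, mul_one, heq]
        refine (eq_of_subset_of_card_le hS' ?_).symm
        rw [card_smul_finset, card_posWindow (by omega), heq]

lemma eq_swapProd_take {π : ℕ → Perm (Fin m)} {l : List ℕ} (h0 : π 0 = 1)
    (hstep : ∀ t, t < l.length → π (t + 1) = π t * adjSwap m (l.getD t 0)) :
    ∀ t ≤ l.length, π t = swapProd m (l.take t)
  | 0, _ => h0
  | t + 1, ht => by
    rw [hstep t ht, eq_swapProd_take h0 hstep t (by omega), List.take_add_one,
      List.getElem?_eq_getElem ht, Option.toList_some, swapProd_append,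
      List.getD_eq_getElem _ _ ht]
    simp [swapProd]

end Windows

/-- Let m ≥ 2 and let Υ be the GreedySwaps list (Υ(2) = [1];
Υ(m) = Υ(m−1) ++ [m−1, …, 1] ++ [i+1 : i ∈ Υ(m−1)]).  Define π_0 = identity and
π_{t+1} = π_t followed by the adjacent transposition at position Υ(m)[t+1]
(the (t+1)-st, i.e. 0-based t-th, entry of the list).  Then every subset S with
1 ≤ |S| ≤ m−1 occurs as the prefix set of size |S| of some π_t, t ≤ |Υ(m)|. -/
theorem greedy_covers_all_models (m : ℕ) (hm : 2 ≤ m)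
    (Υ : ℕ → List ℕ)
    (hbase : Υ 2 = [1])
    (hrec : ∀ k, 3 ≤ k →
      Υ k = Υ (k - 1) ++ (List.range (k - 1)).map (fun j => k - 1 - j)
              ++ (Υ (k - 1)).map (· + 1))
    (π : ℕ → Equiv.Perm (Fin m))
    (h0 : π 0 = 1)
    (hstep : ∀ t, t < (Υ m).length →
      π (t + 1) = π t * adjSwap m ((Υ m).getD t 0)) :
    ∀ S : Finset (Fin m), 1 ≤ S.card → S.card ≤ m - 1 →
      ∃ t ≤ (Υ m).length, prefixSet (π t) S.card = S := by
  intro S _ hS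
  have hΥ : Υ m = greedySwaps m := eq_greedySwaps_of_rec Υ hbase hrec hm
  obtain ⟨t, ht, hSt⟩ := exists_swapProd_take_greedySwaps_smul_posWindow m
    (m := m) (a := 0) (S := S) (by omega) 1 (by simp [posWindow_zero_self])
    (by omega)
  refine ⟨t, hΥ ▸ ht, ?_⟩
  rw [eq_swapProd_take h0 hstep t (hΥ ▸ ht), prefixSet_eq_smul_posWindow, hΥ]
  simpa using hSt
end

section
/- Let m ≥ 2. The minimum, over all sequences π_0, π_1, …, π_T of permutations of {1, …, m} with π_0 arbitrary and each π_{t+1} obtained from π_t by an adjacent transposition, subject to the condition that every subset S ⊆ {1, …, m} with 1 ≤ |S| ≤ m−1 occurs as the prefix set of size |S| of some π_t, of the number of transpositions T, equals exactly 2^m − m − 1. -/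
/-! A permutation has only `m - 1` nonempty proper prefix sets, and the adjacent transposition at
position `j` changes only the prefix set of size `j`; so a walk of `T` transpositions meets at most
`m - 1 + T` of the `2 ^ m - 2` nonempty proper subsets, whence `T ≥ 2 ^ m - m - 1`.

Conversely, by induction on `m`: run an optimal walk for `m` variables with the new variable in the
last position, move the new variable to the front with `m` transpositions, and run the walk
backwards. Subsets without the new variable are prefix sets during the first phase, subsets
containing it during the last one, and `2 (2 ^ m - m - 1) + m = 2 ^ (m + 1) - (m + 1) - 1`. -/

open Equiv Finset

section Walks

variable {α β : Type*} {r : α → α → Prop} {π π₁ π₂ : ℕ → α} {T T₁ T₂ : ℕ}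

def IsWalk (r : α → α → Prop) (π : ℕ → α) (T : ℕ) : Prop :=
  ∀ t < T, r (π t) (π (t + 1))

def walkAppend (π₁ : ℕ → α) (T₁ : ℕ) (π₂ : ℕ → α) : ℕ → α :=
  fun t => if t ≤ T₁ then π₁ t else π₂ (t - T₁)

namespace IsWalk

lemma mono (h : IsWalk r π T) (hle : T₁ ≤ T) : IsWalk r π T₁ :=
  fun t ht => h t (by omega)

lemma map {r' : β → β → Prop} {f : α → β} (hf : ∀ a b, r a b → r' (f a) (f b))
    (h : IsWalk r π T) : IsWalk r' (f ∘ π) T :=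
  fun t ht => hf _ _ (h t ht)

lemma reverse [Std.Symm r] (h : IsWalk r π T) : IsWalk r (fun t => π (T - t)) T := by
  intro t ht
  have hstep := Std.Symm.symm _ _ (h (T - (t + 1)) (by omega))
  rwa [show T - (t + 1) + 1 = T - t by omega] at hstep

lemma append (h₁ : IsWalk r π₁ T₁) (h₂ : IsWalk r π₂ T₂) (h : π₁ T₁ = π₂ 0) :
    IsWalk r (walkAppend π₁ T₁ π₂) (T₁ + T₂) := by
  intro t ht
  unfold walkAppend
  rcases lt_or_ge t T₁ with ht₁ | ht₁
  · rw [if_pos ht₁.le, if_pos (Nat.succ_le_of_lt ht₁)]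
    exact h₁ t ht₁
  · rw [if_neg (by omega : ¬ t + 1 ≤ T₁), show t + 1 - T₁ = t - T₁ + 1 by omega]
    split_ifs with ht₁'
    · obtain rfl : t = T₁ := by omega
      rw [h, Nat.sub_self]
      exact h₂ 0 (by omega)
    · exact h₂ _ (by omega)

lemma card_biUnion_le [DecidableEq β] {F : α → Finset β} {c : ℕ} (hF : ∀ a, (F a).card ≤ c)
    (hstep : ∀ a b, r a b → ∃ x, F b ⊆ insert x (F a)) (h : IsWalk r π T) :
    ((range (T + 1)).biUnion fun t => F (π t)).card ≤ c + T := by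
  induction T with
  | zero => simpa using hF (π 0)
  | succ T ih =>
    obtain ⟨x, hx⟩ := hstep _ _ (h T (by omega))
    have hsub : (range (T + 2)).biUnion (fun t => F (π t)) ⊆
        insert x ((range (T + 1)).biUnion fun t => F (π t)) := by
      rw [range_add_one, biUnion_insert]
      exact union_subset (hx.trans (insert_subset_insert _
        (subset_biUnion_of_mem (fun t => F (π t)) (self_mem_range_succ T)))) (subset_insert _ _)
    calc _ ≤ _ := card_le_card hsub
      _ ≤ _ + 1 := card_insert_le _ _
      _ ≤ c + (T + 1) := by have := ih (h.mono T.le_succ); omega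

end IsWalk

lemma walkAppend_add (h : π₁ T₁ = π₂ 0) (s : ℕ) : walkAppend π₁ T₁ π₂ (T₁ + s) = π₂ s := by
  unfold walkAppend
  split_ifs with hle
  · obtain rfl : s = 0 := by omega
    simpa using h
  · simp

lemma image_Iic_subset_walkAppend_left :
    π₁ '' Set.Iic T₁ ⊆ walkAppend π₁ T₁ π₂ '' Set.Iic (T₁ + T₂) := by
  rintro _ ⟨t, ht, rfl⟩
  exact ⟨t, by simp only [Set.mem_Iic] at ht ⊢; omega, if_pos ht⟩

lemma image_Iic_subset_walkAppend_right (h : π₁ T₁ = π₂ 0) :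
    π₂ '' Set.Iic T₂ ⊆ walkAppend π₁ T₁ π₂ '' Set.Iic (T₁ + T₂) := by
  rintro _ ⟨s, hs, rfl⟩
  exact ⟨T₁ + s, by simp only [Set.mem_Iic] at hs ⊢; omega, walkAppend_add h s⟩

lemma image_Iic_reverse : (fun t => π (T - t)) '' Set.Iic T = π '' Set.Iic T := by
  ext x
  constructor
  · rintro ⟨t, -, rfl⟩
    exact ⟨T - t, by simp, rfl⟩
  · rintro ⟨t, ht, rfl⟩
    exact ⟨T - t, by simp, congrArg π (Nat.sub_sub_self ht)⟩

end Walks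

section Permutations

variable {m : ℕ}

lemma adjSwap_eq_swap {j : ℕ} (h₁ : 1 ≤ j) (h₂ : j + 1 ≤ m) :
    adjSwap m j = swap ⟨j - 1, by omega⟩ ⟨j, by omega⟩ :=
  dif_pos ⟨h₁, h₂⟩

lemma adjSwap_mul_self (m j : ℕ) : adjSwap m j * adjSwap m j = 1 := by
  unfold adjSwap
  split_ifs <;> simp

instance : Std.Symm (IsAdjSwapStep (m := m)) where
  symm := by
    rintro σ _ ⟨j, h₁, h₂, rfl⟩
    exact ⟨j, h₁, h₂, by rw [mul_assoc, adjSwap_mul_self, mul_one]⟩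

lemma mem_prefixSet {σ : Perm (Fin m)} {k : ℕ} {x : Fin m} :
    x ∈ prefixSet σ k ↔ (σ⁻¹ x : ℕ) < k := by
  simp only [prefixSet, mem_image, mem_filter, mem_univ, true_and]
  exact ⟨fun ⟨i, hi, hx⟩ => by simpa [← hx] using hi, fun h => ⟨σ⁻¹ x, h, by simp⟩⟩

lemma prefixSet_of_le {σ : Perm (Fin m)} {k : ℕ} (hk : m ≤ k) : prefixSet σ k = univ := by
  ext x
  simp only [mem_prefixSet, mem_univ, iff_true]
  omega

lemma prefixSet_zero (σ : Perm (Fin m)) : prefixSet σ 0 = ∅ := by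
  ext x
  simp [mem_prefixSet]

lemma prefixSet_mul_adjSwap_of_ne (σ : Perm (Fin m)) {j k : ℕ} (hk : k ≠ j) :
    prefixSet (σ * adjSwap m j) k = prefixSet σ k := by
  ext x
  simp only [mem_prefixSet, mul_inv_rev, Perm.mul_apply]
  unfold adjSwap
  split_ifs with hj
  · rw [swap_inv]
    rcases eq_or_ne (σ⁻¹ x) ⟨j - 1, by omega⟩ with hx | hx
    · rw [hx, swap_apply_left]; simp only; omega
    rcases eq_or_ne (σ⁻¹ x) ⟨j, by omega⟩ with hx' | hx'
    · rw [hx', swap_apply_right]; simp only; omega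
    · rw [swap_apply_of_ne_of_ne hx hx']
  · rfl

/-- A permutation `σ` is read as an ordering: `σ i` is the variable in position `i`. Then
`insertLastAt σ p` places the new variable `Fin.last m` in position `p` and the ordering `σ` in the
remaining positions. -/
def insertLastAt (σ : Perm (Fin m)) (p : Fin (m + 1)) : Perm (Fin (m + 1)) :=
  (finSuccEquiv' p).trans (σ.optionCongr.trans (finSuccEquiv' (Fin.last m)).symm)

section InsertLastAt

variable (σ : Perm (Fin m)) (p : Fin (m + 1))

@[simp]
lemma insertLastAt_apply_self : insertLastAt σ p p = Fin.last m := by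
  simp [insertLastAt]

@[simp]
lemma insertLastAt_apply_succAbove (i : Fin m) :
    insertLastAt σ p (p.succAbove i) = (σ i).castSucc := by
  simp [insertLastAt]

lemma insertLastAt_inv_last : (insertLastAt σ p)⁻¹ (Fin.last m) = p :=
  Perm.inv_eq_iff_eq.2 (insertLastAt_apply_self σ p).symm

lemma insertLastAt_inv_castSucc (y : Fin m) :
    (insertLastAt σ p)⁻¹ y.castSucc = p.succAbove (σ⁻¹ y) :=
  Perm.inv_eq_iff_eq.2 (by simp)

lemma insertLastAt_mul_swap (a b : Fin m) :
    insertLastAt σ p * swap (p.succAbove a) (p.succAbove b) = insertLastAt (σ * swap a b) p := by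
  ext1 x
  induction x using Fin.succAboveCases p with
  | x =>
    rw [Perm.mul_apply, swap_apply_of_ne_of_ne (p.succAbove_ne a).symm (p.succAbove_ne b).symm]
    simp
  | p i =>
    rw [Perm.mul_apply, Fin.succAbove_right_injective.swap_apply]
    simp

lemma insertLastAt_succ_mul_swap (i : Fin m) :
    insertLastAt σ i.succ * swap i.castSucc i.succ = insertLastAt σ i.castSucc := by
  ext1 x
  induction x using Fin.succAboveCases i.castSucc with
  | x => simp
  | p k =>
    rw [insertLastAt_apply_succAbove, Perm.mul_apply]
    rcases lt_trichotomy k i with hk | rfl | hk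
    · rw [Fin.succAbove_castSucc_of_lt _ _ hk,
        swap_apply_of_ne_of_ne (by simpa using hk.ne) (Fin.castSucc_lt_succ_iff.2 hk.le).ne]
      simpa [Fin.succAbove_succ_of_le _ _ hk.le] using insertLastAt_apply_succAbove σ i.succ k
    · simpa using insertLastAt_apply_succAbove σ k.succ k
    · rw [Fin.succAbove_castSucc_of_le _ _ hk.le,
        swap_apply_of_ne_of_ne (Fin.castSucc_lt_succ_iff.2 hk.le).ne' (by simpa using hk.ne')]
      simpa [Fin.succAbove_succ_of_lt _ _ hk] using insertLastAt_apply_succAbove σ i.succ k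

variable {σ}

lemma prefixSet_insertLastAt_last {k : ℕ} (hk : k ≤ m) :
    prefixSet (insertLastAt σ (Fin.last m)) k = (prefixSet σ k).image Fin.castSucc := by
  ext x
  induction x using Fin.lastCases with
  | last => simp [mem_prefixSet, insertLastAt_inv_last, hk, Fin.castSucc_ne_last]
  | cast y => simp [mem_prefixSet, insertLastAt_inv_castSucc]

lemma prefixSet_insertLastAt_zero (k : ℕ) :
    prefixSet (insertLastAt σ 0) (k + 1) =
      insert (Fin.last m) ((prefixSet σ k).image Fin.castSucc) := by
  ext x
  induction x using Fin.lastCases with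
  | last => simp [mem_prefixSet, insertLastAt_inv_last]
  | cast y => simp [mem_prefixSet, insertLastAt_inv_castSucc, Fin.castSucc_ne_last]

end InsertLastAt

namespace IsAdjSwapStep

variable {σ τ : Perm (Fin m)}

lemma insertLastAt_last (h : IsAdjSwapStep σ τ) :
    IsAdjSwapStep (insertLastAt σ (Fin.last m)) (insertLastAt τ (Fin.last m)) := by
  obtain ⟨j, h₁, h₂, rfl⟩ := h
  refine ⟨j, h₁, by omega, ?_⟩
  rw [adjSwap_eq_swap h₁ h₂, adjSwap_eq_swap h₁ (by omega), ← insertLastAt_mul_swap,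
    Fin.succAbove_last]
  rfl

lemma insertLastAt_zero (h : IsAdjSwapStep σ τ) :
    IsAdjSwapStep (insertLastAt σ 0) (insertLastAt τ 0) := by
  obtain ⟨j, h₁, h₂, rfl⟩ := h
  refine ⟨j + 1, by omega, by omega, ?_⟩
  rw [adjSwap_eq_swap h₁ h₂, adjSwap_eq_swap (by omega) (by omega), ← insertLastAt_mul_swap,
    Fin.succAbove_zero]
  congr 2
  exact Fin.ext (by simp; omega)

end IsAdjSwapStep

lemma isWalk_insertLastAt_moveToFront (σ : Perm (Fin m)) :
    IsWalk IsAdjSwapStep (fun s => insertLastAt σ ⟨m - s, by omega⟩) m := by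
  intro s hs
  refine ⟨m - s, by omega, by omega, ?_⟩
  rw [adjSwap_eq_swap (by omega) (by omega)]
  have e₁ : (⟨m - s, by omega⟩ : Fin (m + 1)) = Fin.succ ⟨m - s - 1, by omega⟩ :=
    Fin.ext (by simp; omega)
  have e₂ : (⟨m - (s + 1), by omega⟩ : Fin (m + 1)) = Fin.castSucc ⟨m - s - 1, by omega⟩ :=
    Fin.ext (by simp; omega)
  beta_reduce
  rw [e₁, e₂, ← insertLastAt_succ_mul_swap]
  rfl

def CoversProperSubsets (P : Set (Perm (Fin m))) : Prop :=
  ∀ S : Finset (Fin m), 1 ≤ S.card → S.card ≤ m - 1 → ∃ σ ∈ P, prefixSet σ S.card = S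

lemma coversProperSubsets_image_Iic {π : ℕ → Perm (Fin m)} {T : ℕ} :
    CoversProperSubsets (π '' Set.Iic T) ↔
      ∀ S : Finset (Fin m), 1 ≤ S.card → S.card ≤ m - 1 → ∃ t ≤ T, prefixSet (π t) S.card = S := by
  simp [CoversProperSubsets]

end Permutations

section LowerBound

variable {m : ℕ}

def properPrefixSets (σ : Perm (Fin m)) : Finset (Finset (Fin m)) :=
  (Icc 1 (m - 1)).image (prefixSet σ)

lemma card_properPrefixSets_le (σ : Perm (Fin m)) : (properPrefixSets σ).card ≤ m - 1 :=
  card_image_le.trans (by simp)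

lemma IsAdjSwapStep.properPrefixSets_subset_insert {σ τ : Perm (Fin m)} (h : IsAdjSwapStep σ τ) :
    ∃ S, properPrefixSets τ ⊆ insert S (properPrefixSets σ) := by
  obtain ⟨j, -, -, rfl⟩ := h
  refine ⟨prefixSet (σ * adjSwap m j) j, fun S hS => ?_⟩
  obtain ⟨k, hk, rfl⟩ := mem_image.1 hS
  rcases eq_or_ne k j with rfl | hkj
  · exact mem_insert_self _ _
  · rw [prefixSet_mul_adjSwap_of_ne σ hkj]
    exact mem_insert_of_mem (mem_image_of_mem _ hk)

lemma card_filter_nonempty_proper (α : Type*) [Fintype α] [DecidableEq α] :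
    (univ.filter fun S : Finset α => 1 ≤ S.card ∧ S.card ≤ Fintype.card α - 1).card =
      2 ^ Fintype.card α - 2 := by
  rcases isEmpty_or_nonempty α with hα | hα
  · rw [Fintype.card_eq_zero, filter_false_of_mem (fun S _ => by omega)]
    rfl
  have hfilter : (univ.filter fun S : Finset α => 1 ≤ S.card ∧ S.card ≤ Fintype.card α - 1) =
      (univ.erase ∅).erase univ := by
    ext S
    have := card_le_univ S
    have := Fintype.card_pos (α := α)
    simp only [mem_filter, mem_univ, true_and, mem_erase, ne_eq, ← card_eq_iff_eq_univ,
      ← nonempty_iff_ne_empty, ← card_pos, and_true]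
    omega
  rw [hfilter, card_erase_of_mem (mem_erase.2 ⟨univ_nonempty.ne_empty, mem_univ _⟩),
    card_erase_of_mem (mem_univ _), card_univ, Fintype.card_finset]
  rfl

lemma le_of_isWalk_of_coversProperSubsets {π : ℕ → Perm (Fin m)} {T : ℕ}
    (hπ : IsWalk IsAdjSwapStep π T) (hcov : CoversProperSubsets (π '' Set.Iic T)) :
    2 ^ m - m - 1 ≤ T := by
  rcases Nat.eq_zero_or_pos m with rfl | hm
  · simp
  have hsub : (univ.filter fun S : Finset (Fin m) => 1 ≤ S.card ∧ S.card ≤ m - 1) ⊆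
      (range (T + 1)).biUnion fun t => properPrefixSets (π t) := by
    intro S hS
    obtain ⟨h₁, h₂⟩ := (mem_filter.1 hS).2
    obtain ⟨t, ht, hσ⟩ := coversProperSubsets_image_Iic.1 hcov S h₁ h₂
    exact mem_biUnion.2 ⟨t, mem_range.2 (by omega), hσ ▸ mem_image_of_mem _ (mem_Icc.2 ⟨h₁, h₂⟩)⟩
  have hcount : 2 ^ m - 2 ≤ m - 1 + T := by
    calc 2 ^ m - 2 = _ := by simpa using (card_filter_nonempty_proper (Fin m)).symm
      _ ≤ _ := card_le_card hsub
      _ ≤ m - 1 + T := hπ.card_biUnion_le card_properPrefixSets_le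
          fun _ _ h => h.properPrefixSets_subset_insert
  have := Nat.lt_two_pow_self (n := m)
  omega

end LowerBound

lemma CoversProperSubsets.insertLastAt {m : ℕ} {P : Set (Perm (Fin m))}
    {Q : Set (Perm (Fin (m + 1)))} (hP : CoversProperSubsets P) (hne : P.Nonempty)
    (hlast : ∀ σ ∈ P, insertLastAt σ (Fin.last m) ∈ Q) (hzero : ∀ σ ∈ P, insertLastAt σ 0 ∈ Q) :
    CoversProperSubsets Q := by
  intro S h₁ h₂
  obtain ⟨σ₀, hσ₀⟩ := hne
  set B := S.preimage Fin.castSucc (Fin.castSucc_injective m).injOn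
  have hB : B.image Fin.castSucc = S.erase (Fin.last m) := by
    ext x
    induction x using Fin.lastCases with
    | last => simp
    | cast y => simp [B, Fin.castSucc_ne_last]
  have hBcard : B.card = (S.erase (Fin.last m)).card := by
    rw [← hB, card_image_of_injective _ (Fin.castSucc_injective m)]
  by_cases hmem : Fin.last m ∈ S
  · have hS : S = insert (Fin.last m) (B.image Fin.castSucc) := by
      rw [hB, insert_erase hmem]
    have hcard : S.card = B.card + 1 := by
      rw [hBcard, card_erase_of_mem hmem]
      omega
    rcases B.eq_empty_or_nonempty with hBe | hBne
    · refine ⟨_, hzero σ₀ hσ₀, ?_⟩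
      rw [hcard, prefixSet_insertLastAt_zero, hS, hBe, card_empty, prefixSet_zero]
    · obtain ⟨σ, hσ, hpre⟩ := hP B (one_le_card.2 hBne) (by omega)
      exact ⟨_, hzero σ hσ, by rw [hcard, prefixSet_insertLastAt_zero, hpre, ← hS]⟩
  · have hS : S = B.image Fin.castSucc := by rw [hB, erase_eq_of_notMem hmem]
    have hcard : S.card = B.card := by rw [hBcard, erase_eq_of_notMem hmem]
    rcases Nat.lt_or_ge B.card m with hlt | hge
    · obtain ⟨σ, hσ, hpre⟩ := hP B (by omega) (by omega)
      exact ⟨_, hlast σ hσ, by rw [hcard, prefixSet_insertLastAt_last (by omega), hpre, ← hS]⟩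
    · have hBuniv : B = univ := (card_eq_iff_eq_univ B).1
        (le_antisymm (card_le_univ B) (by simpa using hge))
      refine ⟨_, hlast σ₀ hσ₀, ?_⟩
      rw [hcard, prefixSet_insertLastAt_last (by omega), hS, hBuniv, card_univ, Fintype.card_fin,
        prefixSet_of_le le_rfl]

theorem exists_isWalk_coversProperSubsets (m : ℕ) :
    ∃ π : ℕ → Perm (Fin m), IsWalk IsAdjSwapStep π (2 ^ m - m - 1) ∧
      CoversProperSubsets (π '' Set.Iic (2 ^ m - m - 1)) := by
  induction m with
  | zero =>
    exact ⟨1, fun t ht => by simp at ht, fun S h₁ _ => by simp [S.eq_empty_of_isEmpty] at h₁⟩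
  | succ m ih =>
    obtain ⟨π, hπ, hcov⟩ := ih
    set T := 2 ^ m - m - 1
    have hT : 2 ^ (m + 1) - (m + 1) - 1 = T + m + T := by
      have := Nat.lt_two_pow_self (n := m)
      rw [pow_succ]
      omega
    let back := (insertLastAt · (Fin.last m)) ∘ π
    let move := fun s => insertLastAt (π T) ⟨m - s, by omega⟩
    let front := (insertLastAt · 0) ∘ fun t => π (T - t)
    have hjoin₁ : back T = move 0 := rfl
    have hjoin₂ : walkAppend back T move (T + m) = front 0 := by
      rw [walkAppend_add hjoin₁]
      simp [move, front]
    refine ⟨walkAppend (walkAppend back T move) (T + m) front, ?_, ?_⟩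
    · rw [hT]
      exact ((hπ.map fun _ _ h => h.insertLastAt_last).append
        (isWalk_insertLastAt_moveToFront _) hjoin₁).append
        ((hπ.reverse).map fun _ _ h => h.insertLastAt_zero) hjoin₂
    · rw [hT]
      refine hcov.insertLastAt ⟨π 0, 0, by simp, rfl⟩ ?_ ?_
      · rintro _ ⟨t, ht, rfl⟩
        exact image_Iic_subset_walkAppend_left (image_Iic_subset_walkAppend_left ⟨t, ht, rfl⟩)
      · intro σ hσ
        rw [← image_Iic_reverse] at hσ
        obtain ⟨t, ht, rfl⟩ := hσ
        exact image_Iic_subset_walkAppend_right hjoin₂ ⟨t, ht, rfl⟩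

theorem greedy_is_optimal_general (m : ℕ) :
    IsLeast {T : ℕ | ∃ π : ℕ → Equiv.Perm (Fin m),
        (∀ t, t < T → IsAdjSwapStep (π t) (π (t + 1))) ∧
        ∀ S : Finset (Fin m), 1 ≤ S.card → S.card ≤ m - 1 →
          ∃ t ≤ T, prefixSet (π t) S.card = S}
      (2 ^ m - m - 1) := by
  refine ⟨?_, fun T ⟨π, hπ, hcov⟩ =>
    le_of_isWalk_of_coversProperSubsets hπ (coversProperSubsets_image_Iic.2 hcov)⟩
  obtain ⟨π, hπ, hcov⟩ := exists_isWalk_coversProperSubsets m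
  exact ⟨π, hπ, coversProperSubsets_image_Iic.1 hcov⟩

/-- For m ≥ 2, the minimum number T of adjacent transpositions, over
all sequences π_0, …, π_T of permutations of {1, …, m} (π_0 arbitrary, each π_{t+1}
obtained from π_t by an adjacent transposition) such that every subset S with
1 ≤ |S| ≤ m−1 occurs as the prefix set of size |S| of some π_t, equals
exactly 2^m − m − 1. -/
theorem greedy_is_optimal (m : ℕ) (hm : 2 ≤ m) :
    IsLeast {T : ℕ | ∃ π : ℕ → Equiv.Perm (Fin m),
        (∀ t, t < T → IsAdjSwapStep (π t) (π (t + 1))) ∧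
        ∀ S : Finset (Fin m), 1 ≤ S.card → S.card ≤ m - 1 →
          ∃ t ≤ T, prefixSet (π t) S.card = S}
      (2 ^ m - m - 1) :=
  greedy_is_optimal_general m
end

section
/- If T : ℕ → ℤ satisfies T(2) = 12 and T(m) = 2·T(m−1) + 6·(2^{m−1} − 1 − (m−1)) + Σ_{i=1}^{m−1} 6·(m − i + 1) for all m ≥ 3, then T(m) = 3m·2^m + 6·2^m − 3m² − 9m − 6 for all m ≥ 2. -/
lemma sum_aux (c : ℤ) : ∀ n : ℕ, ∑ i ∈ Finset.Icc 1 n, (6 : ℤ) * (c - (i : ℤ) + 1)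
    = (n : ℤ) * (6 * (c + 1)) - 3 * (n : ℤ) * ((n : ℤ) + 1) := by
  intro n
  induction n with
  | zero => simp
  | succ k ih =>
    rw [Finset.sum_Icc_succ_top (by omega), ih]
    push_cast
    ring

/-- If T : ℕ → ℤ satisfies T(2) = 12 and, for all m ≥ 3,
T(m) = 2·T(m−1) + 6·(2^{m−1} − 1 − (m−1)) + Σ_{i=1}^{m−1} 6·(m − i + 1),
then T(m) = 3m·2^m + 6·2^m − 3m² − 9m − 6 for all m ≥ 2. -/
theorem runtime_closed_form (T : ℕ → ℤ)
    (hbase : T 2 = 12)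
    (hrec : ∀ m : ℕ, 3 ≤ m →
      T m = 2 * T (m - 1) + 6 * ((2 : ℤ) ^ (m - 1) - 1 - ((m : ℤ) - 1))
              + ∑ i ∈ Finset.Icc 1 (m - 1), (6 : ℤ) * ((m : ℤ) - (i : ℤ) + 1)) :
    ∀ m : ℕ, 2 ≤ m →
      T m = 3 * (m : ℤ) * 2 ^ m + 6 * 2 ^ m - 3 * (m : ℤ) ^ 2 - 9 * (m : ℤ) - 6 := by
  intro m hm
  induction m, hm using Nat.le_induction with
  | base => rw [hbase]; norm_num
  | succ n hn ih =>
    have hrec' := hrec (n + 1) (by omega)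
    simp only [Nat.add_sub_cancel] at hrec'
    rw [hrec', ih, sum_aux]
    push_cast
    ring
end

section
/- Let R be an m × m upper triangular real matrix, let 1 ≤ i ≤ m−1, and let R' be the matrix obtained from R by swapping columns i and i+1. Then there exists an orthogonal m × m real matrix G that agrees with the identity matrix outside rows/columns i and i+1, and whose restriction to the 2×2 block on rows and columns {i, i+1} is a rotation [[c, s], [−s, c]] with c² + s² = 1, such that G · R' is upper triangular. -/
/-!
Swapping the adjacent columns `p ⋖ q` of an upper triangular `R` leaves a single nonzero entry
below the diagonal, `R q q` at position `(q, p)`. A rotation in the `(p, q)`-plane recombines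
only rows `p` and `q`, so it preserves the zeros of every other row, and choosing `(c, s)`
proportional to `(R p q, R q q)` annihilates that entry.
-/

open Matrix

namespace Matrix

variable {n α : Type*} [DecidableEq n] [CommRing α]

def givens (p q : n) (c s : α) : Matrix n n α :=
  of fun r =>
    if r = p then Pi.single p c + Pi.single q s
    else if r = q then Pi.single p (-s) + Pi.single q c
    else Pi.single r 1

variable {p q : n} (c s : α)

theorem givens_row_left : givens p q c s p = Pi.single p c + Pi.single q s :=
  if_pos rfl

theorem givens_row_right (hpq : p ≠ q) : givens p q c s q = Pi.single p (-s) + Pi.single q c :=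
  (if_neg hpq.symm).trans (if_pos rfl)

theorem givens_row_of_ne {r : n} (hrp : r ≠ p) (hrq : r ≠ q) : givens p q c s r = Pi.single r 1 :=
  (if_neg hrp).trans (if_neg hrq)

theorem givens_apply_eq_one_apply {r k : n} (h : (r ≠ p ∧ r ≠ q) ∨ (k ≠ p ∧ k ≠ q)) :
    givens p q c s r k = (1 : Matrix n n α) r k := by
  rw [one_eq_pi_single]
  by_cases hrp : r = p
  · obtain ⟨hkp, hkq⟩ := h.resolve_left (by simp [hrp])
    simp [hrp, givens_row_left, hkp, hkq]
  by_cases hrq : r = q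
  · subst hrq
    obtain ⟨hkp, hkq⟩ := h.resolve_left (by simp)
    simp [givens_row_right _ _ (Ne.symm hrp), hkp, hkq]
  rw [givens_row_of_ne _ _ hrp hrq]

theorem givens_one_zero (hpq : p ≠ q) : givens p q (1 : α) 0 = 1 := by
  ext r k
  rw [one_eq_pi_single]
  by_cases hrp : r = p
  · subst hrp; simp [givens_row_left]
  by_cases hrq : r = q
  · subst hrq; simp [givens_row_right _ _ hpq]
  rw [givens_row_of_ne _ _ hrp hrq]

theorem transpose_givens (hpq : p ≠ q) : (givens p q c s)ᵀ = givens p q c (-s) := by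
  ext r k
  rw [transpose_apply]
  by_cases hrp : r = p <;> by_cases hrq : r = q <;> by_cases hkp : k = p <;>
    by_cases hkq : k = q <;> subst_vars <;>
    simp_all [givens, Pi.single_apply, eq_comm]

variable [Fintype n]

theorem givens_mul_row_left (M : Matrix n n α) : (givens p q c s * M) p = c • M p + s • M q := by
  rw [mul_apply_eq_vecMul, givens_row_left, add_vecMul, single_vecMul, single_vecMul]
  rfl

theorem givens_mul_row_right (hpq : p ≠ q) (M : Matrix n n α) :
    (givens p q c s * M) q = -s • M p + c • M q := by
  rw [mul_apply_eq_vecMul, givens_row_right _ _ hpq, add_vecMul, single_vecMul, single_vecMul]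
  rfl

theorem givens_mul_row_of_ne {r : n} (hrp : r ≠ p) (hrq : r ≠ q) (M : Matrix n n α) :
    (givens p q c s * M) r = M r := by
  rw [mul_apply_eq_vecMul, givens_row_of_ne _ _ hrp hrq, single_vecMul, one_smul]
  rfl

theorem givens_mul_givens (hpq : p ≠ q) (c' s' : α) :
    givens p q c s * givens p q c' s' = givens p q (c * c' - s * s') (c * s' + s * c') := by
  funext r
  by_cases hrp : r = p
  · subst hrp
    rw [givens_mul_row_left, givens_row_left, givens_row_left, givens_row_right _ _ hpq]
    funext k
    by_cases hkp : k = r <;> by_cases hkq : k = q <;> subst_vars <;>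
      simp_all [sub_eq_add_neg, add_comm]
  by_cases hrq : r = q
  · subst hrq
    rw [givens_mul_row_right _ _ hpq, givens_row_right _ _ hpq, givens_row_left,
      givens_row_right _ _ hpq]
    funext k
    by_cases hkp : k = p <;> by_cases hkq : k = r <;> subst_vars <;>
      simp_all [sub_eq_add_neg, add_comm]
  rw [givens_mul_row_of_ne _ _ hrp hrq, givens_row_of_ne _ _ hrp hrq, givens_row_of_ne _ _ hrp hrq]

theorem givens_mem_orthogonalGroup (hpq : p ≠ q) {c s : α} (hcs : c ^ 2 + s ^ 2 = 1) :
    givens p q c s ∈ orthogonalGroup n α := by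
  rw [mem_orthogonalGroup_iff, transpose_givens _ _ hpq, givens_mul_givens _ _ hpq,
    ← givens_one_zero hpq]
  congr 1
  · linear_combination hcs
  · ring

end Matrix

theorem exists_sq_add_sq_eq_one_and_mul_eq_mul (a b : ℝ) :
    ∃ c s : ℝ, c ^ 2 + s ^ 2 = 1 ∧ c * b = s * a := by
  set z : ℂ := ⟨a, b⟩
  refine ⟨Real.cos z.arg, Real.sin z.arg, Real.cos_sq_add_sin_sq _, ?_⟩
  linear_combination Real.sin z.arg * z.norm_mul_cos_arg - Real.cos z.arg * z.norm_mul_sin_arg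

namespace Matrix

variable {n α : Type*} [LinearOrder n] [CommRing α] {p q : n}

theorem BlockTriangular.submatrix_swap_apply_eq_zero {R : Matrix n n α}
    (hR : R.BlockTriangular id) (hpq : p ⋖ q) {r k : n} (hkr : k < r) (hrk : (r, k) ≠ (q, p)) :
    R.submatrix id (Equiv.swap p q) r k = 0 := by
  refine hR (show Equiv.swap p q k < r from ?_)
  by_cases hkp : k = p
  · subst hkp
    rw [Equiv.swap_apply_left]
    exact (hpq.ge_of_gt hkr).lt_of_ne fun hqr => hrk (by rw [hqr])
  by_cases hkq : k = q
  · subst hkq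
    rw [Equiv.swap_apply_right]
    exact hpq.lt.trans hkr
  rwa [Equiv.swap_apply_of_ne_of_ne hkp hkq]

theorem blockTriangular_givens_mul [Fintype n] {M : Matrix n n α} (hpq : p ⋖ q)
    (hM : ∀ r k, k < r → (r, k) ≠ (q, p) → M r k = 0) {c s : α} (hcs : c * M q p = s * M p p) :
    (givens p q c s * M).BlockTriangular id := by
  intro r k (hkr : k < r)
  by_cases hrp : r = p
  · subst hrp
    have hkq : k < q := hkr.trans hpq.lt
    rw [congrFun (givens_mul_row_left c s M) k, Pi.add_apply, Pi.smul_apply, Pi.smul_apply,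
      hM r k hkr (by simp [hpq.ne]), hM q k hkq (by simp [hkr.ne]), smul_zero, smul_zero, add_zero]
  by_cases hrq : r = q
  · subst hrq
    rw [congrFun (givens_mul_row_right c s hpq.ne M) k, Pi.add_apply, Pi.smul_apply, Pi.smul_apply,
      smul_eq_mul, smul_eq_mul]
    by_cases hkp : k = p
    · subst hkp
      linear_combination hcs
    have hk_lt_p : k < p := (hpq.le_of_lt hkr).lt_of_ne hkp
    rw [hM p k hk_lt_p (by simp [hpq.ne]), hM r k hkr (by simp [hkp])]
    ring
  rw [congrFun (givens_mul_row_of_ne c s hrp hrq M) k]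
  exact hM r k hkr (by simp [hrq])

end Matrix

/-- Let R be an m × m upper triangular real matrix, 1 ≤ i ≤ m−1,
and let R' be R with columns i and i+1 swapped (1-indexed; 0-indexed columns i−1
and i).  Then there is an orthogonal matrix G agreeing with the identity outside
rows/columns i and i+1, whose 2×2 block on rows/columns {i, i+1} is a rotation
[[c, s], [−s, c]] with c² + s² = 1, such that G · R' is upper triangular. -/
theorem givens_retriangularization (m : ℕ) (R : Matrix (Fin m) (Fin m) ℝ)
    (hR : R.BlockTriangular id) (i : ℕ) (hi1 : 1 ≤ i) (hi2 : i ≤ m - 1) :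
    ∃ G : Matrix (Fin m) (Fin m) ℝ, ∃ c s : ℝ,
      G ∈ Matrix.orthogonalGroup (Fin m) ℝ ∧
      c ^ 2 + s ^ 2 = 1 ∧
      G ⟨i - 1, by omega⟩ ⟨i - 1, by omega⟩ = c ∧
      G ⟨i - 1, by omega⟩ ⟨i, by omega⟩ = s ∧
      G ⟨i, by omega⟩ ⟨i - 1, by omega⟩ = -s ∧
      G ⟨i, by omega⟩ ⟨i, by omega⟩ = c ∧
      (∀ r c' : Fin m,
        ((r ≠ ⟨i - 1, by omega⟩ ∧ r ≠ ⟨i, by omega⟩) ∨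
          (c' ≠ ⟨i - 1, by omega⟩ ∧ c' ≠ ⟨i, by omega⟩)) →
        G r c' = (1 : Matrix (Fin m) (Fin m) ℝ) r c') ∧
      (G * R.submatrix id (Equiv.swap ⟨i - 1, by omega⟩ ⟨i, by omega⟩)).BlockTriangular id := by
  set p : Fin m := ⟨i - 1, by omega⟩
  set q : Fin m := ⟨i, by omega⟩
  have hpq : p ⋖ q := Fin.covBy_iff.2 (Nat.covBy_iff_add_one_eq.2 (by simp [p, q]; omega))
  have hne : p ≠ q := hpq.ne
  obtain ⟨c, s, hcs, hrot⟩ := exists_sq_add_sq_eq_one_and_mul_eq_mul (R p q) (R q q)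
  refine ⟨givens p q c s, c, s, givens_mem_orthogonalGroup hne hcs, hcs, ?_, ?_, ?_, ?_,
    fun r k h => givens_apply_eq_one_apply c s h,
    blockTriangular_givens_mul hpq (fun r k => hR.submatrix_swap_apply_eq_zero hpq) ?_⟩
  · simp [givens_row_left, hne.symm]
  · simp [givens_row_left, hne]
  · simp [givens_row_right _ _ hne, hne.symm]
  · simp [givens_row_right _ _ hne, hne.symm]
  · simpa using hrot
end

section
/- Let m ≥ 2 and p ≥ 1. Suppose for each processor i ∈ {1, …, p} we have a sequence of permutations π^{(i)}_0, π^{(i)}_1, …, π^{(i)}_{T_i} of {1, …, m}, where each π^{(i)}_{t+1} is obtained from π^{(i)}_t by an adjacent transposition. If every nonempty subset S ⊆ {1, …, m} occurs as the prefix set of size |S| of some π^{(i)}_t for some i and t, then Σ_{i=1}^p T_i ≥ 2^m − 1 − m·p. -/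
lemma prefixSet_step {m : ℕ} (σ : Equiv.Perm (Fin m)) {j : ℕ} (h1 : 1 ≤ j)
    (h2 : j + 1 ≤ m) {k : ℕ} (hk : k ≠ j) :
    prefixSet (σ * adjSwap m j) k = prefixSet σ k := by
  unfold prefixSet adjSwap
  rw [dif_pos ⟨h1, h2⟩]
  set a : Fin m := ⟨j - 1, by omega⟩ with ha
  set b : Fin m := ⟨j, by omega⟩ with hb
  have hmono : ∀ y : Fin m, ((Equiv.swap a b) y : ℕ) < k ↔ (y : ℕ) < k := by
    intro y
    rcases eq_or_ne y a with rfl | hne1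
    · rw [Equiv.swap_apply_left, ha, hb]; simp; omega
    rcases eq_or_ne y b with rfl | hne2
    · rw [Equiv.swap_apply_right, ha, hb]; simp; omega
    · rw [Equiv.swap_apply_of_ne_of_ne hne1 hne2]
  have key : (Finset.univ.filter fun i : Fin m => (i : ℕ) < k).image (Equiv.swap a b)
      = Finset.univ.filter fun i : Fin m => (i : ℕ) < k := by
    ext x
    simp only [Finset.mem_image, Finset.mem_filter, Finset.mem_univ, true_and]
    constructor
    · rintro ⟨y, hy, rfl⟩; exact (hmono y).mpr hy
    · intro hx
      refine ⟨Equiv.swap a b x, (hmono x).mpr hx, Equiv.swap_apply_self a b x⟩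
  rw [show ⇑(σ * Equiv.swap a b) = ⇑σ ∘ ⇑(Equiv.swap a b) from rfl,
    ← Finset.image_image, key]

lemma one_proc {m : ℕ} (π : ℕ → Equiv.Perm (Fin m)) (T : ℕ)
    (hstep : ∀ t < T, IsAdjSwapStep (π t) (π (t + 1))) :
    ((Finset.range (T + 1)).biUnion
      (fun t => (Finset.range m).image (fun k => prefixSet (π t) (k + 1)))).card
      ≤ m + T := by
  induction T with
  | zero =>
    rw [show Finset.range (0 + 1) = {0} from rfl, Finset.singleton_biUnion]
    exact Finset.card_image_le.trans (by rw [Finset.card_range]; omega)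
  | succ T ih =>
    have hstep' : ∀ t < T, IsAdjSwapStep (π t) (π (t + 1)) :=
      fun t ht => hstep t (by omega)
    obtain ⟨j, hj1, hj2, hj⟩ := hstep T (by omega)
    set F : ℕ → Finset (Finset (Fin m)) :=
      fun t => (Finset.range m).image (fun k => prefixSet (π t) (k + 1)) with hF
    have hsub : F (T + 1) ⊆ F T ∪ {prefixSet (π (T + 1)) j} := by
      intro S hS
      simp only [hF, Finset.mem_image, Finset.mem_range] at hS
      obtain ⟨k, hk, rfl⟩ := hS
      rcases eq_or_ne (k + 1) j with hkj | hkj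
      · rw [hkj]; exact Finset.mem_union_right _ (Finset.mem_singleton_self _)
      · refine Finset.mem_union_left _ ?_
        simp only [hF, Finset.mem_image, Finset.mem_range]
        exact ⟨k, hk, by rw [hj, prefixSet_step _ hj1 hj2 hkj]⟩
    rw [Finset.range_add_one, Finset.biUnion_insert]
    have hTmem : F T ⊆ (Finset.range (T + 1)).biUnion F :=
      Finset.subset_biUnion_of_mem F (by simp)
    calc (F (T + 1) ∪ (Finset.range (T + 1)).biUnion F).card
        ≤ ({prefixSet (π (T + 1)) j} ∪ (Finset.range (T + 1)).biUnion F).card := by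
          apply Finset.card_le_card
          apply Finset.union_subset _ Finset.subset_union_right
          exact hsub.trans (Finset.union_subset
            (hTmem.trans Finset.subset_union_right) Finset.subset_union_left)
      _ ≤ 1 + ((Finset.range (T + 1)).biUnion F).card := by
          apply (Finset.card_union_le _ _).trans; simp
      _ ≤ m + (T + 1) := by have := ih hstep'; omega

/-- Let m ≥ 2, p ≥ 1, and for each processor i ∈ {1, …, p} let
π^{(i)}_0, …, π^{(i)}_{T_i} be a sequence of permutations of {1, …, m} with each
π^{(i)}_{t+1} obtained from π^{(i)}_t by an adjacent transposition.  If every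
nonempty subset S occurs as the prefix set of size |S| of some π^{(i)}_t, then
Σ_{i=1}^p T_i ≥ 2^m − 1 − m·p. -/
theorem parallel_total_transpositions_lower_bound (m p : ℕ) (hm : 2 ≤ m)
    (hp : 1 ≤ p) (T : Fin p → ℕ) (π : Fin p → ℕ → Equiv.Perm (Fin m))
    (hstep : ∀ i : Fin p, ∀ t, t < T i → IsAdjSwapStep (π i t) (π i (t + 1)))
    (hcover : ∀ S : Finset (Fin m), S.Nonempty →
      ∃ i : Fin p, ∃ t ≤ T i, prefixSet (π i t) S.card = S) :
    2 ^ m - 1 - m * p ≤ ∑ i, T i := by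
  set U : Fin p → Finset (Finset (Fin m)) := fun i =>
    (Finset.range (T i + 1)).biUnion
      (fun t => (Finset.range m).image (fun k => prefixSet (π i t) (k + 1))) with hU
  have hcard : ∀ i, (U i).card ≤ m + T i := fun i =>
    one_proc (π i) (T i) (hstep i)
  have hsubset : (Finset.univ : Finset (Finset (Fin m))).erase ∅ ⊆
      Finset.univ.biUnion U := by
    intro S hS
    have hSne : S.Nonempty := Finset.nonempty_of_ne_empty (Finset.ne_of_mem_erase hS)
    obtain ⟨i, t, ht, hpre⟩ := hcover S hSne
    have hc1 : 1 ≤ S.card := Finset.card_pos.mpr hSne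
    have hcm : S.card ≤ m := by simpa using Finset.card_le_univ S
    refine Finset.mem_biUnion.mpr ⟨i, Finset.mem_univ i, ?_⟩
    refine Finset.mem_biUnion.mpr ⟨t, by simp; omega, ?_⟩
    refine Finset.mem_image.mpr ⟨S.card - 1, by simp; omega, ?_⟩
    rw [show S.card - 1 + 1 = S.card by omega, hpre]
  have h1 : ((Finset.univ : Finset (Finset (Fin m))).erase ∅).card = 2 ^ m - 1 := by
    rw [Finset.card_erase_of_mem (Finset.mem_univ _)]
    simp [Fintype.card_finset]
  have h2 : (Finset.univ.biUnion U).card ≤ ∑ i, (m + T i) :=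
    Finset.card_biUnion_le.trans (Finset.sum_le_sum fun i _ => hcard i)
  have h3 : 2 ^ m - 1 ≤ ∑ i, (m + T i) := by
    rw [← h1]
    exact (Finset.card_le_card hsubset).trans h2
  have h4 : ∑ i, (m + T i) = m * p + ∑ i, T i := by
    rw [Finset.sum_add_distrib]; simp [mul_comm]
  omega
end

section
/- Let m ≥ 2 and p ≥ 1. Suppose for each processor i ∈ {1, …, p} we have a sequence of permutations π^{(i)}_0, …, π^{(i)}_{T_i} of {1, …, m}, where each π^{(i)}_{t+1} is obtained from π^{(i)}_t by an adjacent transposition, and every nonempty subset S ⊆ {1, …, m} occurs as the prefix set of size |S| of some π^{(i)}_t. Then there exists a processor i with T_i ≥ (2^m − 1 − m·p)/p (i.e., p·T_i ≥ 2^m − 1 − m·p). -/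
lemma filter_image_swap {m k : ℕ} (a b : Fin m)
    (h : ((a : ℕ) < k ∧ (b : ℕ) < k) ∨ (k ≤ (a : ℕ) ∧ k ≤ (b : ℕ))) :
    (Finset.univ.filter fun i : Fin m => (i : ℕ) < k).image (Equiv.swap a b)
      = Finset.univ.filter fun i : Fin m => (i : ℕ) < k := by
  apply Finset.eq_of_subset_of_card_le
  · intro x hx
    simp only [Finset.mem_image, Finset.mem_filter, Finset.mem_univ, true_and] at hx ⊢
    obtain ⟨y, hy, rfl⟩ := hx
    rcases eq_or_ne y a with rfl | ha
    · rw [Equiv.swap_apply_left]; omega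
    rcases eq_or_ne y b with rfl | hb
    · rw [Equiv.swap_apply_right]; omega
    · rw [Equiv.swap_apply_of_ne_of_ne ha hb]; exact hy
  · rw [Finset.card_image_of_injective _ (Equiv.injective _)]

lemma prefixSet_mul_swap {m : ℕ} (σ : Equiv.Perm (Fin m)) (a b : Fin m) (k : ℕ)
    (h : ((a : ℕ) < k ∧ (b : ℕ) < k) ∨ (k ≤ (a : ℕ) ∧ k ≤ (b : ℕ))) :
    prefixSet (σ * Equiv.swap a b) k = prefixSet σ k := by
  rw [prefixSet, prefixSet, Equiv.Perm.coe_mul, ← Finset.image_image,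
    filter_image_swap a b h]

/-- All prefix sets of a permutation, for sizes 1 through m. -/
def allPrefix {m : ℕ} (σ : Equiv.Perm (Fin m)) : Finset (Finset (Fin m)) :=
  (Finset.Icc 1 m).image (prefixSet σ)

lemma step_subset {m : ℕ} {σ σ' : Equiv.Perm (Fin m)} (h : IsAdjSwapStep σ σ') :
    ∃ S, allPrefix σ' ⊆ insert S (allPrefix σ) := by
  obtain ⟨j, hj1, hj2, rfl⟩ := h
  refine ⟨prefixSet (σ * adjSwap m j) j, ?_⟩
  intro X hX
  simp only [allPrefix, Finset.mem_image, Finset.mem_Icc] at hX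
  obtain ⟨k, hk, rfl⟩ := hX
  rcases eq_or_ne k j with rfl | hkj
  · exact Finset.mem_insert_self _ _
  · apply Finset.mem_insert_of_mem
    have heq : prefixSet (σ * adjSwap m j) k = prefixSet σ k := by
      rw [adjSwap, dif_pos ⟨hj1, hj2⟩]
      apply prefixSet_mul_swap
      simp only []
      omega
    rw [heq]
    exact Finset.mem_image.2 ⟨k, Finset.mem_Icc.2 hk, rfl⟩

/-- Let m ≥ 2, p ≥ 1, and for each processor i ∈ {1, …, p} let
π^{(i)}_0, …, π^{(i)}_{T_i} be a sequence of permutations of {1, …, m} with each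
π^{(i)}_{t+1} obtained from π^{(i)}_t by an adjacent transposition, such that
every nonempty subset S occurs as the prefix set of size |S| of some π^{(i)}_t.
Then some processor i has T_i ≥ (2^m − 1 − m·p)/p, i.e. p·T_i ≥ 2^m − 1 − m·p. -/
theorem parallel_busiest_processor_lower_bound (m p : ℕ) (hm : 2 ≤ m)
    (hp : 1 ≤ p) (T : Fin p → ℕ) (π : Fin p → ℕ → Equiv.Perm (Fin m))
    (hstep : ∀ i : Fin p, ∀ t, t < T i → IsAdjSwapStep (π i t) (π i (t + 1)))
    (hcover : ∀ S : Finset (Fin m), S.Nonempty →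
      ∃ i : Fin p, ∃ t ≤ T i, prefixSet (π i t) S.card = S) :
    ∃ i : Fin p, 2 ^ m - 1 - m * p ≤ p * T i := by
  classical
  set C : Fin p → ℕ → Finset (Finset (Fin m)) :=
    fun i t => (Finset.range (t + 1)).biUnion fun s => allPrefix (π i s) with hC
  have hcard : ∀ i : Fin p, ∀ t, t ≤ T i → (C i t).card ≤ m + t := by
    intro i t
    induction t with
    | zero =>
      intro _
      have : C i 0 = allPrefix (π i 0) := by simp [hC]
      rw [this]
      calc (allPrefix (π i 0)).card ≤ (Finset.Icc 1 m).card := Finset.card_image_le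
        _ = m := by simp
        _ ≤ m + 0 := by omega
    | succ t ih =>
      intro ht
      obtain ⟨S, hS⟩ := step_subset (hstep i t (by omega))
      have hsub : C i (t + 1) ⊆ insert S (C i t) := by
        intro X hX
        simp only [hC, Finset.mem_biUnion, Finset.mem_range] at hX
        obtain ⟨s, hs, hXs⟩ := hX
        rcases (by omega : s ≤ t ∨ s = t + 1) with hst | rfl
        · exact Finset.mem_insert_of_mem (Finset.mem_biUnion.2
            ⟨s, Finset.mem_range.2 (by omega), hXs⟩)
        · rcases Finset.mem_insert.1 (hS hXs) with h1 | h1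
          · exact Finset.mem_insert.2 (Or.inl h1)
          · exact Finset.mem_insert_of_mem (Finset.mem_biUnion.2
              ⟨t, Finset.mem_range.2 (by omega), h1⟩)
      calc (C i (t + 1)).card ≤ (insert S (C i t)).card := Finset.card_le_card hsub
        _ ≤ (C i t).card + 1 := Finset.card_insert_le _ _
        _ ≤ m + t + 1 := by have := ih (by omega); omega
  have hsub : (Finset.univ.powerset.erase ∅ : Finset (Finset (Fin m))) ⊆
      Finset.univ.biUnion fun i : Fin p => C i (T i) := by
    intro S hS
    have hne : S ≠ ∅ := (Finset.mem_erase.1 hS).1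
    obtain ⟨i, t, ht, hSt⟩ := hcover S (Finset.nonempty_iff_ne_empty.2 hne)
    refine Finset.mem_biUnion.2 ⟨i, Finset.mem_univ i, ?_⟩
    refine Finset.mem_biUnion.2 ⟨t, Finset.mem_range.2 (by omega), ?_⟩
    refine Finset.mem_image.2 ⟨S.card, Finset.mem_Icc.2 ⟨?_, ?_⟩, hSt⟩
    · exact Finset.one_le_card.2 (Finset.nonempty_iff_ne_empty.2 hne)
    · calc S.card ≤ (Finset.univ : Finset (Fin m)).card := Finset.card_le_card (Finset.subset_univ S)
        _ = m := by simp
  have : Nonempty (Fin p) := ⟨⟨0, hp⟩⟩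
  obtain ⟨i0, hi0⟩ := Finite.exists_max T
  refine ⟨i0, ?_⟩
  have h1 : (Finset.univ.powerset.erase ∅ : Finset (Finset (Fin m))).card = 2 ^ m - 1 := by
    rw [Finset.card_erase_of_mem (by simp)]
    simp [Finset.card_powerset]
  have h2 : (Finset.univ.biUnion fun i : Fin p => C i (T i)).card ≤
      ∑ i : Fin p, (C i (T i)).card := Finset.card_biUnion_le
  have h3 : ∑ i : Fin p, (C i (T i)).card ≤ ∑ i : Fin p, (m + T i) :=
    Finset.sum_le_sum fun i _ => hcard i (T i) le_rfl
  have h4 : ∑ i : Fin p, (m + T i) ≤ p * m + p * T i0 := by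
    rw [Finset.sum_add_distrib]
    have : ∑ i : Fin p, T i ≤ ∑ _i : Fin p, T i0 := Finset.sum_le_sum fun i _ => hi0 i
    simp only [Finset.sum_const, Finset.card_univ, Fintype.card_fin, smul_eq_mul] at this ⊢
    omega
  have h5 := Finset.card_le_card hsub
  rw [Nat.mul_comm p m] at h4
  omega
end
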